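/- arXiv:2304.07539 — 2 statements merged into one kernel-verified Lean document; each statement's English description precedes it below -/
import Mathlib

section
/- Let P be a meet-semilattice with a Grothendieck topology J, and let L be a frame. For every meet-semilattice homomorphism a : P → L which is J-continuous (for each J-covering sieve S on x, a(x) = ⋁_{y ∈ S} a(y)), there exists a unique frame homomorphism 𝐚 : J-Idl(P) → L with 𝐚 ∘ η = a, where η : P → J-Idl(P) sends x to the J-closure of ↓x. -/
/-- A down-set `D` is `J`-closed if `x ∈ D` whenever some `J`-covering sieve
on `x` is contained in `D`. -/
def JClosed {P : Type*} [Preorder P] (J : P → Set (Set P)) (D : LowerSet P) : Prop :=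
  ∀ x : P, ∀ S ∈ J x, (∀ y ∈ S, y ∈ D) → x ∈ D

/-- The `J`-closure of a down-set: the smallest `J`-closed down-set
containing it. -/
def JCl {P : Type*} [Preorder P] (J : P → Set (Set P)) (D : LowerSet P) : LowerSet P :=
  sInf {E : LowerSet P | JClosed J E ∧ D ≤ E}

/-- Universal property of `J`-Idl(P): for a meet-semilattice `P` (with top)
carrying a Grothendieck topology `J`, and a `J`-continuous meet-semilattice
homomorphism `a : P → L` into a frame `L`, there is a unique frame
homomorphism `A` on the `J`-closed down-sets (preserving top, binary meets,
and arbitrary joins — the join of a family of closed down-sets being the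
`J`-closure of its union) with `A (η x) = a x`, where `η x = JCl (↓x)`. -/
theorem stmt11 (P L : Type*) [SemilatticeInf P] [OrderTop P] [Order.Frame L]
    (J : P → Set (Set P))
    (hsieve : ∀ x : P, ∀ S ∈ J x,
      (∀ y ∈ S, y ≤ x) ∧ (∀ y ∈ S, ∀ z, z ≤ y → z ∈ S))
    (hmax : ∀ x : P, {y | y ≤ x} ∈ J x)
    (hstab : ∀ x : P, ∀ S ∈ J x, ∀ y : P, y ≤ x → {z | z ∈ S ∧ z ≤ y} ∈ J y)
    (htrans : ∀ x : P, ∀ S ∈ J x, ∀ R : Set P,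
      (∀ y ∈ R, y ≤ x) → (∀ y ∈ R, ∀ z, z ≤ y → z ∈ R) →
      (∀ y ∈ S, {z | z ∈ R ∧ z ≤ y} ∈ J y) → R ∈ J x)
    (a : P → L) (hatop : a ⊤ = ⊤) (hameet : ∀ x y : P, a (x ⊓ y) = a x ⊓ a y)
    (hacont : ∀ x : P, ∀ S ∈ J x, a x = ⨆ y ∈ S, a y) :
    ∃ A : LowerSet P → L,
      ((A ⊤ = ⊤) ∧
        (∀ D E : LowerSet P, JClosed J D → JClosed J E → A (D ⊓ E) = A D ⊓ A E) ∧
        (∀ S : Set (LowerSet P), (∀ D ∈ S, JClosed J D) →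
          A (JCl J (sSup S)) = ⨆ D ∈ S, A D) ∧
        (∀ x : P, A (JCl J (LowerSet.Iic x)) = a x)) ∧
      (∀ A' : LowerSet P → L,
        ((A' ⊤ = ⊤) ∧
          (∀ D E : LowerSet P, JClosed J D → JClosed J E → A' (D ⊓ E) = A' D ⊓ A' E) ∧
          (∀ S : Set (LowerSet P), (∀ D ∈ S, JClosed J D) →
            A' (JCl J (sSup S)) = ⨆ D ∈ S, A' D) ∧
          (∀ x : P, A' (JCl J (LowerSet.Iic x)) = a x)) →
        ∀ D : LowerSet P, JClosed J D → A' D = A D) := by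
  classical
  -- monotonicity of a
  have amono : ∀ {y x : P}, y ≤ x → a y ≤ a x := by
    intro y x h
    have : a y = a y ⊓ a x := by rw [← hameet, inf_eq_left.mpr h]
    rw [this]; exact inf_le_right
  set A : LowerSet P → L := fun D => ⨆ x ∈ D, a x with hA
  have hle : ∀ D : LowerSet P, D ≤ JCl J D := fun D => le_sInf fun E hE => hE.2
  have hmin : ∀ D E : LowerSet P, JClosed J E → D ≤ E → JCl J D ≤ E :=
    fun D E h1 h2 => sInf_le ⟨h1, h2⟩
  have hJClcl : ∀ D : LowerSet P, JClosed J (JCl J D) := by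
    intro D x S hS hsub
    rw [JCl, LowerSet.mem_sInf_iff]
    intro E hE
    exact hE.1 x S hS fun y hy => by
      have := hsub y hy
      rw [JCl, LowerSet.mem_sInf_iff] at this
      exact this E hE
  have hfix : ∀ D : LowerSet P, JClosed J D → JCl J D = D :=
    fun D h => le_antisymm (hmin D D h le_rfl) (hle D)
  have hAmono : ∀ D E : LowerSet P, D ≤ E → A D ≤ A E := by
    intro D E h
    exact iSup₂_le fun x hx => le_iSup₂ (f := fun x (_ : x ∈ E) => a x) x (h hx)
  have hAcl : ∀ D : LowerSet P, A (JCl J D) = A D := by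
    intro D
    refine le_antisymm ?_ (hAmono _ _ (hle D))
    set E : LowerSet P := ⟨{x | a x ≤ A D}, fun x y hyx hx => le_trans (amono hyx) hx⟩ with hE
    have hEcl : JClosed J E := by
      intro x S hS hsub
      show a x ≤ A D
      rw [hacont x S hS]
      exact iSup₂_le fun y hy => hsub y hy
    have hDE : D ≤ E := fun x hx => le_iSup₂ (f := fun x (_ : x ∈ D) => a x) x hx
    have := hmin D E hEcl hDE
    exact iSup₂_le fun x hx => this hx
  have hAtop : A ⊤ = ⊤ := by
    refine le_antisymm le_top ?_
    rw [← hatop]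
    exact le_iSup₂ (f := fun x (_ : x ∈ (⊤ : LowerSet P)) => a x) ⊤ trivial
  have hAinf : ∀ D E : LowerSet P, A (D ⊓ E) = A D ⊓ A E := by
    intro D E
    refine le_antisymm (le_inf (hAmono _ _ inf_le_left) (hAmono _ _ inf_le_right)) ?_
    rw [hA]
    simp only [iSup_inf_eq, inf_iSup_eq]
    refine iSup₂_le fun x hx => iSup₂_le fun y hy => ?_
    rw [← hameet]
    have hxy : y ⊓ x ∈ D ⊓ E := by
      rw [LowerSet.mem_inf_iff]
      exact ⟨D.lower inf_le_left hy, E.lower inf_le_right hx⟩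
    exact le_iSup₂ (f := fun z (_ : z ∈ D ⊓ E) => a z) (y ⊓ x) hxy
  have hAsup : ∀ S : Set (LowerSet P), A (sSup S) = ⨆ D ∈ S, A D := by
    intro S
    refine le_antisymm ?_ ?_
    · refine iSup₂_le fun x hx => ?_
      rw [LowerSet.mem_sSup_iff] at hx
      obtain ⟨D, hD, hxD⟩ := hx
      exact le_trans (le_iSup₂ (f := fun z (_ : z ∈ D) => a z) x hxD)
        (le_iSup₂ (f := fun D (_ : D ∈ S) => A D) D hD)
    · exact iSup₂_le fun D hD => hAmono _ _ (le_sSup hD)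
  have hAeta : ∀ x : P, A (JCl J (LowerSet.Iic x)) = a x := by
    intro x
    rw [hAcl]
    refine le_antisymm (iSup₂_le fun y hy => amono hy) ?_
    exact le_iSup₂ (f := fun z (_ : z ∈ LowerSet.Iic x) => a z) x le_rfl
  refine ⟨A, ⟨hAtop, fun D E _ _ => hAinf D E,
    fun S _ => by rw [hAcl, hAsup], hAeta⟩, ?_⟩
  rintro A' ⟨-, -, hA'sup, hA'eta⟩ D hD
  set S : Set (LowerSet P) := (fun x => JCl J (LowerSet.Iic x)) '' (D : Set P) with hS
  have hScl : ∀ E ∈ S, JClosed J E := by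
    rintro E ⟨x, -, rfl⟩; exact hJClcl _
  have hSD : sSup S = D := by
    refine le_antisymm (sSup_le ?_) ?_
    · rintro E ⟨x, hx, rfl⟩
      exact hmin _ _ hD (LowerSet.Iic_le.mpr hx)
    · intro x hx
      have : x ∈ sSup S := LowerSet.mem_sSup_iff.mpr
        ⟨JCl J (LowerSet.Iic x), ⟨x, hx, rfl⟩, hle _ le_rfl⟩
      exact this
  have h1 : A' D = ⨆ E ∈ S, A' E := by
    rw [← hA'sup S hScl, hSD, hfix D hD]
  rw [h1, hS, iSup_image]
  simp only [hA'eta]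
  rfl
end

section
/- Let L : C^op → Frame be a functor such that each transition map L(f) has a left adjoint ∃_f, and define K_L assigning to each object (d,V) of C ⋊ L the set of sieves {(c_i,U_i) →^{f_i} (d,V)} with V = ⋁_i ∃_{f_i}(U_i). Then K_L satisfies the maximality and transitivity axioms of a Grothendieck topology on C ⋊ L. -/
open CategoryTheory

/-- Let `L : Cᵒᵖ → Frame` be a doctrine of frames (fibres `L c`, transition
maps `m f : L d → L c` for `f : c ⟶ d`, functorial and monotone) such that
each `m f` has a left adjoint `E f`.  Define `K_L` by declaring a sieve `S`
on an object `(d, V)` of `C ⋊ L` (a family of arrows `(c, U) → (d, V)`, i.e.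
`f : c ⟶ d` with `U ≤ m f V`, closed under precomposition) covering iff
`V = ⨆ E f U` over the arrows of `S`.  Then `K_L` satisfies the maximality
and transitivity axioms of a Grothendieck topology on `C ⋊ L`. -/
theorem stmt18 {C : Type*} [Category C] (L : C → Type*) [∀ c, Order.Frame (L c)]
    (m : ∀ {c d : C}, (c ⟶ d) → L d → L c)
    (m_mono : ∀ {c d : C} (f : c ⟶ d), Monotone (m f))
    (m_id : ∀ {c : C} (x : L c), m (𝟙 c) x = x)
    (m_comp : ∀ {c d e : C} (f : c ⟶ d) (g : d ⟶ e) (x : L e),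
      m (f ≫ g) x = m f (m g x))
    (E : ∀ {c d : C}, (c ⟶ d) → L c → L d)
    (adj : ∀ {c d : C} (f : c ⟶ d) (x : L c) (y : L d), E f x ≤ y ↔ x ≤ m f y) :
    -- maximality: the maximal sieve on `(d, V)` is `K_L`-covering
    (∀ (d : C) (V : L d),
      V = ⨆ (c : C) (f : c ⟶ d) (U : L c) (_ : U ≤ m f V), E f U) ∧
    -- transitivity: if `S` is covering and the pullback of a sieve `R` along
    -- every arrow of `S` is covering, then `R` is covering
    (∀ (d : C) (V : L d) (S R : ∀ c : C, (c ⟶ d) → L c → Prop),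
      (∀ (c : C) (f : c ⟶ d) (U : L c), S c f U → U ≤ m f V) →
      (∀ (c : C) (f : c ⟶ d) (U : L c), S c f U →
        ∀ (e : C) (g : e ⟶ c) (W : L e), W ≤ m g U → S e (g ≫ f) W) →
      (∀ (c : C) (f : c ⟶ d) (U : L c), R c f U → U ≤ m f V) →
      (∀ (c : C) (f : c ⟶ d) (U : L c), R c f U →
        ∀ (e : C) (g : e ⟶ c) (W : L e), W ≤ m g U → R e (g ≫ f) W) →
      (V = ⨆ (c : C) (f : c ⟶ d) (U : L c) (_ : S c f U), E f U) →
      (∀ (c : C) (f : c ⟶ d) (U : L c), S c f U →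
        U = ⨆ (e : C) (g : e ⟶ c) (W : L e) (_ : W ≤ m g U ∧ R e (g ≫ f) W), E g W) →
      V = ⨆ (c : C) (f : c ⟶ d) (U : L c) (_ : R c f U), E f U) := by
  constructor
  · intro d V
    apply le_antisymm
    · have hV : V ≤ E (𝟙 d) V := by
        have := (adj (𝟙 d) V (E (𝟙 d) V)).mp le_rfl
        rwa [m_id] at this
      exact hV.trans (le_iSup_of_le d (le_iSup_of_le (𝟙 d) (le_iSup_of_le V
        (le_iSup_of_le (by rw [m_id]) le_rfl))))
    · refine iSup_le fun c => iSup_le fun f => iSup_le fun U => iSup_le fun h => ?_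
      exact (adj f U V).mpr h
  · intro d V S R _hS hSdown hRle _hRdown hVS hSR
    apply le_antisymm
    · rw [hVS]
      refine iSup_le fun c => iSup_le fun f => iSup_le fun U => iSup_le fun hU => ?_
      -- E f U ≤ sup over R
      rw [hSR c f U hU]
      -- E f of a sup
      rw [(adj f _ _)]
      refine iSup_le fun e => iSup_le fun g => iSup_le fun W => iSup_le fun hW => ?_
      have hEE : E (g ≫ f) W ≤ ⨆ (c : C) (f : c ⟶ d) (U : L c) (_ : R c f U), E f U :=
        le_iSup_of_le e (le_iSup_of_le (g ≫ f) (le_iSup_of_le W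
          (le_iSup_of_le hW.2 le_rfl)))
      calc E g W ≤ m f (E f (E g W)) := (adj f _ _).mp le_rfl
        _ ≤ m f (⨆ (c : C) (f : c ⟶ d) (U : L c) (_ : R c f U), E f U) := by
            apply m_mono
            rw [adj, adj, ← m_comp, ← adj]
            exact hEE
    · refine iSup_le fun c => iSup_le fun f => iSup_le fun U => iSup_le fun hU => ?_
      exact (adj f U V).mpr (hRle c f U hU)
end
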